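/- Let K, K_J ≥ 1, γ > 0 and κ > 4·K·K_J·(e^γ + e^{3γ}). Suppose two interacting waves of strengths σ₁⁻ (first family) and σ₂⁻ (second family) at position x̄ ∈ (0,1) produce waves σ₁⁺, σ₂⁺ with |σ₁⁺ − σ₁⁻| + |σ₂⁺ − σ₂⁻| ≤ K|σ₁⁻σ₂⁻|. If the pre-interaction weighted wave strength V satisfies κ·K·e^{2γ}·V ≤ κ/2 (i.e., V ≤ 1/(2K e^{2γ})) and V ≥ 2K_J(|σ₁⁻|e^{γx̄} + |σ₂⁻|e^{−γx̄}) so the interacting waves are counted in V, then ΔJ := (2K_J|σ₁⁺|e^{γx̄} + |σ₂⁺|e^{−γx̄} − 2K_J|σ₁⁻|e^{γx̄} − |σ₂⁻|e^{−γx̄}) + κ(K|σ₁⁻σ₂⁻|e^{2γ}V − |σ₁⁻σ₂⁻|) satisfies ΔJ ≤ (2K_J K(e^{γx̄} + e^{−γx̄}) − κ/2)|σ₁⁻σ₂⁻| < 0. -/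
import Mathlib

theorem aux9 (K K_J κ p d1 d2 a1 a2 b1 b2 e1 e2 E V : ℝ)
    (hK : 1 ≤ K) (hKJ : 1 ≤ K_J)
    (hp : 0 < p) (hd1 : b1 - a1 ≤ d1) (hd2 : b2 - a2 ≤ d2)
    (h1a : 0 ≤ d1) (h2a : 0 ≤ d2) (he1p : 0 < e1) (he2p : 0 < e2)
    (hinter : d1 + d2 ≤ K * p)
    (hV1 : κ * K * E * V ≤ κ/2)
    (hcoef : 2*K_J*K*(e1 + e2) < κ/2) :
    (2*K_J*b1*e1 + b2*e2 - 2*K_J*a1*e1 - a2*e2) + κ * (K * p * E * V - p)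
      ≤ (2*K_J*K*(e1 + e2) - κ/2) * p := by
  have hKJ0 : (0:ℝ) ≤ 2*K_J := by linarith
  have hA : 2*K_J*b1*e1 - 2*K_J*a1*e1 ≤ 2*K_J*d1*e1 := by
    nlinarith [mul_le_mul_of_nonneg_right hd1 (mul_nonneg hKJ0 he1p.le)]
  have hB : b2*e2 - a2*e2 ≤ 2*K_J*d2*e2 := by
    nlinarith [mul_le_mul_of_nonneg_right hd2 he2p.le,
      mul_nonneg (by linarith : (0:ℝ) ≤ 2*K_J - 1) (mul_nonneg h2a he2p.le)]
  have hC : 2*K_J*d1*e1 + 2*K_J*d2*e2 ≤ 2*K_J*K*(e1 + e2)*p := by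
    nlinarith [mul_le_mul_of_nonneg_left hinter (mul_nonneg hKJ0 (by linarith : (0:ℝ) ≤ e1+e2)),
      mul_nonneg (mul_nonneg hKJ0 h1a) he2p.le,
      mul_nonneg (mul_nonneg hKJ0 h2a) he1p.le]
  have hD : κ * (K * p * E * V) ≤ (κ/2) * p := by nlinarith [mul_le_mul_of_nonneg_right hV1 hp.le]
  nlinarith [hA, hB, hC, hD]

/-- decrease of the weighted Glimm functional at an interaction of
waves of different families inside a pipe. -/
theorem stmt9 (K K_J γ κ V xb σ1m σ2m σ1p σ2p : ℝ)
    (hK : 1 ≤ K) (hKJ : 1 ≤ K_J) (hγ : 0 < γ)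
    (hκ : 4*K*K_J*(Real.exp γ + Real.exp (3*γ)) < κ)
    (hx : xb ∈ Set.Ioo (0:ℝ) 1)
    (hinter : |σ1p - σ1m| + |σ2p - σ2m| ≤ K * |σ1m * σ2m|)
    (hV1 : κ * K * Real.exp (2*γ) * V ≤ κ/2)
    (hV2 : 2*K_J*(|σ1m| * Real.exp (γ*xb) + |σ2m| * Real.exp (-(γ*xb))) ≤ V)
    (h1 : σ1m ≠ 0) (h2 : σ2m ≠ 0) :
    (2*K_J*|σ1p| *Real.exp (γ*xb) + |σ2p| *Real.exp (-(γ*xb))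
        - 2*K_J*|σ1m| *Real.exp (γ*xb) - |σ2m| *Real.exp (-(γ*xb)))
      + κ * (K * |σ1m * σ2m| * Real.exp (2*γ) * V - |σ1m * σ2m|)
      ≤ (2*K_J*K*(Real.exp (γ*xb) + Real.exp (-(γ*xb))) - κ/2) * |σ1m * σ2m| ∧
    (2*K_J*K*(Real.exp (γ*xb) + Real.exp (-(γ*xb))) - κ/2) * |σ1m * σ2m| < 0 := by
  obtain ⟨hx0, hx1⟩ := hx
  have hp : 0 < |σ1m * σ2m| := abs_pos.mpr (mul_ne_zero h1 h2)
  have he1p : (0:ℝ) < Real.exp (γ*xb) := Real.exp_pos _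
  have he2p : (0:ℝ) < Real.exp (-(γ*xb)) := Real.exp_pos _
  have he1le : Real.exp (γ*xb) < Real.exp γ := Real.exp_lt_exp.mpr (by nlinarith)
  have he2le : Real.exp (-(γ*xb)) < 1 := by rw [Real.exp_lt_one_iff]; nlinarith
  have hexp3 : (1:ℝ) < Real.exp (3*γ) := by nlinarith [Real.add_one_le_exp (3*γ)]
  have hKK : (0:ℝ) < 2*K_J*K := by nlinarith
  have hcoef : 2*K_J*K*(Real.exp (γ*xb) + Real.exp (-(γ*xb))) < κ/2 := by
    have hs : Real.exp (γ*xb) + Real.exp (-(γ*xb)) < Real.exp γ + Real.exp (3*γ) := by linarith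
    nlinarith [mul_lt_mul_of_pos_left hs hKK]
  constructor
  · have := aux9 K K_J κ (|σ1m * σ2m|) (|σ1p - σ1m|) (|σ2p - σ2m|) (|σ1m|) (|σ2m|)
      (|σ1p|) (|σ2p|) (Real.exp (γ*xb)) (Real.exp (-(γ*xb))) (Real.exp (2*γ)) V
      hK hKJ hp (abs_sub_abs_le_abs_sub _ _) (abs_sub_abs_le_abs_sub _ _)
      (abs_nonneg _) (abs_nonneg _) he1p he2p hinter hV1 hcoef
    linarith
  · exact mul_neg_of_neg_of_pos (by linarith) hp
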